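/- Let K ∈ ℝ and L > 0, and set c = 4(1 + K²)/L. Define, for t > c, f(t) = (2K/√L)·log(√t + √(t − c)) and g(t) = (2/√L)·log(√t + √(t − c)). Then f and g satisfy the system of ordinary differential equations t f″(t) + f′(t) + 2t f′(t)(f′(t)² + g′(t)²) = 0 and t g″(t) + g′(t) + 2t g′(t)(f′(t)² + g′(t)²) = 0 for all t > c. (This system is the condition for the rotationally symmetric graph (u, v, f(u² + v²), g(u² + v²)) to be a minimal surface in ℝ⁴.) -/

import Mathlib

/-! Both `f` and `g` are multiples `a φ` of `φ(t) = log(√t + √(t − c))`, and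
`φ′(t) = 1 / (2√t√(t − c))`. For such a multiple `t h″ + h′ = −c/(2(t − c)) · h′`, while
`2t((a φ′)² + (b φ′)²) = (a² + b²)/(2(t − c))`, so the system holds as soon as `a² + b² = c`;
for `a = 2K/√L` and `b = 2/√L` this is the definition of `c`. -/

noncomputable section

/-- `f(t) = (2K/√L)·log(√t + √(t − c))` with `c = 4(1 + K²)/L`. -/
def fRot (K L : ℝ) : ℝ → ℝ := fun t =>
  (2 * K / Real.sqrt L) * Real.log (Real.sqrt t + Real.sqrt (t - 4 * (1 + K ^ 2) / L))

/-- `g(t) = (2/√L)·log(√t + √(t − c))` with `c = 4(1 + K²)/L`. -/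
def gRot (K L : ℝ) : ℝ → ℝ := fun t =>
  (2 / Real.sqrt L) * Real.log (Real.sqrt t + Real.sqrt (t - 4 * (1 + K ^ 2) / L))

open Real Filter Topology

namespace LogSqrtAddSqrtSub

variable {c t : ℝ}

theorem hasDerivAt_log (ht : 0 < t) (hct : c < t) :
    HasDerivAt (fun x => log (√x + √(x - c))) (2 * √t * √(t - c))⁻¹ t := by
  have hA : 0 < √t := sqrt_pos.mpr ht
  have hB : 0 < √(t - c) := sqrt_pos.mpr (sub_pos.mpr hct)
  have hsum : HasDerivAt (fun x => √x + √(x - c)) (1 / (2 * √t) + 1 / (2 * √(t - c))) t :=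
    (hasDerivAt_sqrt ht.ne').add (((hasDerivAt_id' t).sub_const c).sqrt (sub_pos.mpr hct).ne')
  refine (hsum.log (add_pos hA hB).ne').congr_deriv ?_
  field_simp
  ring

theorem hasDerivAt_two_mul_sqrt_mul_sqrt_sub (ht : 0 < t) (hct : c < t) :
    HasDerivAt (fun x => 2 * √x * √(x - c)) ((2 * t - c) / (√t * √(t - c))) t := by
  have hA : 0 < √t := sqrt_pos.mpr ht
  have hB : 0 < √(t - c) := sqrt_pos.mpr (sub_pos.mpr hct)
  have hprod : HasDerivAt (fun x => 2 * √x * √(x - c))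
      (2 * (1 / (2 * √t)) * √(t - c) + 2 * √t * (1 / (2 * √(t - c)))) t :=
    ((hasDerivAt_sqrt ht.ne').const_mul 2).mul
      (((hasDerivAt_id' t).sub_const c).sqrt (sub_pos.mpr hct).ne')
  refine hprod.congr_deriv ?_
  field_simp
  rw [sq_sqrt ht.le, sq_sqrt (sub_pos.mpr hct).le]
  ring

theorem deriv_const_mul_log (a : ℝ) (ht : 0 < t) (hct : c < t) :
    deriv (fun x => a * log (√x + √(x - c))) t = a * (2 * √t * √(t - c))⁻¹ :=
  ((hasDerivAt_log ht hct).const_mul a).deriv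

theorem deriv_deriv_const_mul_log (a : ℝ) (ht : 0 < t) (hct : c < t) :
    deriv (deriv fun x => a * log (√x + √(x - c))) t
      = a * (-((2 * t - c) / (√t * √(t - c))) / (2 * √t * √(t - c)) ^ 2) := by
  have hderiv : deriv (fun x => a * log (√x + √(x - c)))
      =ᶠ[𝓝 t] fun x => a * (2 * √x * √(x - c))⁻¹ := by
    filter_upwards [Ioi_mem_nhds ht, Ioi_mem_nhds hct] with x hx hcx
    exact deriv_const_mul_log a hx hcx
  have hne : 2 * √t * √(t - c) ≠ 0 := by
    have := sqrt_pos.mpr ht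
    have := sqrt_pos.mpr (sub_pos.mpr hct)
    positivity
  rw [hderiv.deriv_eq]
  exact (((hasDerivAt_two_mul_sqrt_mul_sqrt_sub ht hct).inv hne).const_mul a).deriv

theorem ode_of_sq_add_sq_eq {a b : ℝ} (hab : a ^ 2 + b ^ 2 = c) (hct : c < t) :
    t * deriv (deriv fun x => a * log (√x + √(x - c))) t
      + deriv (fun x => a * log (√x + √(x - c))) t
      + 2 * t * deriv (fun x => a * log (√x + √(x - c))) t
        * (deriv (fun x => a * log (√x + √(x - c))) t ^ 2
          + deriv (fun x => b * log (√x + √(x - c))) t ^ 2) = 0 := by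
  have ht : 0 < t := lt_of_le_of_lt (hab ▸ by positivity) hct
  have hA : 0 < √t := sqrt_pos.mpr ht
  have hB : 0 < √(t - c) := sqrt_pos.mpr (sub_pos.mpr hct)
  rw [deriv_deriv_const_mul_log a ht hct, deriv_const_mul_log a ht hct,
    deriv_const_mul_log b ht hct]
  field_simp
  have hA2 : √t ^ 2 = t := sq_sqrt ht.le
  have hB2 : √(t - c) ^ 2 = t - c := sq_sqrt (sub_pos.mpr hct).le
  linear_combination 2 * a * √(t - c) ^ 2 * hA2 + 2 * a * t * hB2 + a * t * hab

end LogSqrtAddSqrtSub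

/-- the explicit functions `f`, `g` solve, for `t > c = 4(1+K²)/L`,
the ODE system `t h″ + h′ + 2t h′((f′)² + (g′)²) = 0` (for `h = f` and `h = g`),
which is the minimality condition for the rotationally symmetric graph
`(u, v, f(u² + v²), g(u² + v²))` in `ℝ⁴`. -/
theorem stmt15 (K L : ℝ) (hL : 0 < L) (t : ℝ) (ht : 4 * (1 + K ^ 2) / L < t) :
    (t * deriv (deriv (fRot K L)) t + deriv (fRot K L) t
      + 2 * t * deriv (fRot K L) t
        * ((deriv (fRot K L) t) ^ 2 + (deriv (gRot K L) t) ^ 2) = 0) ∧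
    (t * deriv (deriv (gRot K L)) t + deriv (gRot K L) t
      + 2 * t * deriv (gRot K L) t
        * ((deriv (fRot K L) t) ^ 2 + (deriv (gRot K L) t) ^ 2) = 0) := by
  have hsq : (2 * K / √L) ^ 2 + (2 / √L) ^ 2 = 4 * (1 + K ^ 2) / L := by
    rw [div_pow, div_pow, sq_sqrt hL.le]
    ring
  refine ⟨LogSqrtAddSqrtSub.ode_of_sq_add_sq_eq hsq ht, ?_⟩
  rw [add_comm (deriv (fRot K L) t ^ 2)]
  exact LogSqrtAddSqrtSub.ode_of_sq_add_sq_eq ((add_comm _ _).trans hsq) ht
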